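/- arXiv:1106.5519 — 2 statements merged into one kernel-verified Lean document; each statement's English description precedes it below -/
import Mathlib

section
/- Let n be a positive integer and let s and t be finite subsets of ℝⁿ. Then there exists a finite subset u of ℝⁿ such that the intersection of the convex hull of s with the convex hull of t equals the convex hull of u. In other words, the intersection of two polytopes in ℝⁿ is a polytope. -/
open Set

/-- A polytope in ℝⁿ is the convex hull of a finite set of points. -/
def IsPolytope {n : ℕ} (P : Set (Fin n → ℝ)) : Prop :=
  ∃ s : Finset (Fin n → ℝ), P = convexHull ℝ (s : Set (Fin n → ℝ))

/-- A finite union of polytopes in ℝⁿ. -/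
def IsFinUnionOfPolytopes {n : ℕ} (A : Set (Fin n → ℝ)) : Prop :=
  ∃ (k : ℕ) (P : Fin k → Set (Fin n → ℝ)), (∀ i, IsPolytope (P i)) ∧ A = ⋃ i, P i

/-! Slicing `conv s` by a hyperplane `{f = c}` gives the convex hull of the points of `s` on the
hyperplane together with the points where the segments `[a, b]` with `f a ≤ c < f b` cross it:
if `x = ∑ w y • y` lies on the hyperplane and `D = ∑_{f a ≤ c} w a (c - f a) > 0`, then `x` is the
barycentre of these crossing points with weights `w a * w b * (f b - f a)`, whose total mass is `D`;
if `D = 0`, all the weight of `x` already sits on the hyperplane. Slicing repeatedly,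
`conv (s ×ˢ t)` cut by the diagonal is a polytope, and its first projection is `conv s ∩ conv t`. -/

section Slice

variable {E : Type*} [AddCommGroup E] [Module ℝ E] (f : E →ₗ[ℝ] ℝ) (c : ℝ)

noncomputable def levelCrossing (a b : E) : E :=
  AffineMap.lineMap a b ((c - f a) / (f b - f a))

variable (s : Set E) in
def sliceVertices : Set E :=
  image2 (levelCrossing f c) {a ∈ s | f a ≤ c} {b ∈ s | c < f b} ∪ {a ∈ s | f a = c}

variable {f c}

lemma apply_levelCrossing {a b : E} (h : f a ≠ f b) : f (levelCrossing f c a b) = c := by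
  have : f b - f a ≠ 0 := sub_ne_zero.2 h.symm
  simp only [levelCrossing, AffineMap.lineMap_apply_module, map_add, map_smul, smul_eq_mul]
  field_simp
  ring

lemma sub_smul_levelCrossing {a b : E} (h : f a ≠ f b) :
    (f b - f a) • levelCrossing f c a b = (f b - c) • a + (c - f a) • b := by
  have : f b - f a ≠ 0 := sub_ne_zero.2 h.symm
  rw [levelCrossing, AffineMap.lineMap_apply_module, smul_add, smul_smul, smul_smul]
  congr 2
  · field_simp
    ring
  · field_simp

lemma levelCrossing_mem_segment {a b : E} (ha : f a ≤ c) (hb : c ≤ f b) :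
    levelCrossing f c a b ∈ segment ℝ a b :=
  lineMap_mem_segment ℝ a b ⟨div_nonneg (sub_nonneg.2 ha) (by linarith),
    div_le_one_of_le₀ (by linarith) (by linarith)⟩

lemma Set.Finite.sliceVertices {s : Set E} (hs : s.Finite) : (sliceVertices f c s).Finite :=
  ((hs.sep _).image2 _ (hs.sep _)).union (hs.sep _)

lemma sliceVertices_subset (s : Set E) :
    sliceVertices f c s ⊆ convexHull ℝ s ∩ {x | f x = c} := by
  rintro _ (⟨a, ⟨ha, hac⟩, b, ⟨hb, hbc⟩, rfl⟩ | ⟨ha, hac⟩)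
  · exact ⟨(convex_convexHull ℝ s).segment_subset (subset_convexHull ℝ s ha)
      (subset_convexHull ℝ s hb) (levelCrossing_mem_segment hac hbc.le),
      apply_levelCrossing (hac.trans_lt hbc).ne⟩
  · exact ⟨subset_convexHull ℝ s ha, hac⟩

lemma convexHull_sliceVertices_subset (s : Set E) :
    convexHull ℝ (sliceVertices f c s) ⊆ convexHull ℝ s ∩ {x | f x = c} :=
  convexHull_min (sliceVertices_subset s)
    ((convex_convexHull ℝ s).inter (convex_hyperplane f.isLinear c))

lemma sum_product_mul_sub (A B : Finset E) (w : E → ℝ) :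
    ∑ q ∈ A ×ˢ B, w q.1 * w q.2 * (f q.2 - f q.1) =
      (∑ a ∈ A, w a) * (∑ b ∈ B, w b * (f b - c)) + (∑ a ∈ A, w a * (c - f a)) * ∑ b ∈ B, w b := by
  rw [Finset.sum_product, Finset.sum_mul_sum, Finset.sum_mul_sum, ← Finset.sum_add_distrib]
  refine Finset.sum_congr rfl fun a _ => ?_
  rw [← Finset.sum_add_distrib]
  exact Finset.sum_congr rfl fun b _ => by ring

lemma sum_product_smul_levelCrossing {A B : Finset E} (w : E → ℝ)
    (hAB : ∀ a ∈ A, ∀ b ∈ B, f a ≠ f b) :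
    ∑ q ∈ A ×ˢ B, (w q.1 * w q.2 * (f q.2 - f q.1)) • levelCrossing f c q.1 q.2 =
      (∑ b ∈ B, w b * (f b - c)) • (∑ a ∈ A, w a • a) +
        (∑ a ∈ A, w a * (c - f a)) • ∑ b ∈ B, w b • b := by
  rw [Finset.sum_product]
  trans ∑ a ∈ A, ∑ b ∈ B, ((w b * (f b - c)) • (w a • a) + (w a * (c - f a)) • (w b • b))
  · refine Finset.sum_congr rfl fun a ha => Finset.sum_congr rfl fun b hb => ?_
    rw [mul_smul, sub_smul_levelCrossing (hAB a ha b hb)]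
    module
  · simp only [Finset.sum_add_distrib, ← Finset.sum_smul, ← Finset.smul_sum]

lemma sum_filter_not_le_mul_sub_eq {s : Finset E} {w : E → ℝ} (hw₁ : ∑ y ∈ s, w y = 1)
    (hf : f (∑ y ∈ s, w y • y) = c) :
    ∑ b ∈ s with ¬ f b ≤ c, w b * (f b - c) = ∑ a ∈ s with f a ≤ c, w a * (c - f a) := by
  have hzero : ∑ y ∈ s, w y * (f y - c) = 0 := by
    simp only [mul_sub, Finset.sum_sub_distrib, ← Finset.sum_mul, hw₁, one_mul, ← hf, map_sum,
      map_smul, smul_eq_mul, sub_self]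
  rw [← Finset.sum_filter_add_sum_filter_not s (f · ≤ c)] at hzero
  have hneg : ∑ a ∈ s with f a ≤ c, w a * (c - f a) = -∑ a ∈ s with f a ≤ c, w a * (f a - c) := by
    rw [← Finset.sum_neg_distrib]
    exact Finset.sum_congr rfl fun a _ => by ring
  linarith

lemma apply_eq_of_sum_filter_mul_sub_eq_zero {s : Finset E} {w : E → ℝ} (hw₀ : ∀ y ∈ s, 0 ≤ w y)
    (hle : ∑ a ∈ s with f a ≤ c, w a * (c - f a) = 0)
    (hgt : ∑ b ∈ s with ¬ f b ≤ c, w b * (f b - c) = 0) {y : E} (hy : y ∈ s) (hwy : w y ≠ 0) :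
    f y = c := by
  by_cases hyc : f y ≤ c
  · have := (Finset.sum_eq_zero_iff_of_nonneg fun a ha => mul_nonneg
      (hw₀ a (Finset.mem_filter.1 ha).1) (sub_nonneg.2 (Finset.mem_filter.1 ha).2)).1 hle y
      (Finset.mem_filter.2 ⟨hy, hyc⟩)
    have := (mul_eq_zero.1 this).resolve_left hwy
    linarith
  · have := (Finset.sum_eq_zero_iff_of_nonneg fun b hb => mul_nonneg
      (hw₀ b (Finset.mem_filter.1 hb).1) (sub_nonneg.2 (not_le.1 (Finset.mem_filter.1 hb).2).le)).1
      hgt y (Finset.mem_filter.2 ⟨hy, hyc⟩)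
    have := (mul_eq_zero.1 this).resolve_left hwy
    linarith

lemma sum_smul_mem_convexHull_filter {s : Finset E} {w : E → ℝ} (p : E → Prop) [DecidablePred p]
    (hw₀ : ∀ y ∈ s, 0 ≤ w y) (hw₁ : ∑ y ∈ s, w y = 1) (hp : ∀ y ∈ s, w y ≠ 0 → p y) :
    ∑ y ∈ s, w y • y ∈ convexHull ℝ (s.filter p : Set E) := by
  rw [← Finset.sum_filter_of_ne fun y hy hwy => hp y hy fun h => hwy (by simp [h])]
  refine Finset.mem_convexHull'.2 ⟨w, fun y hy => hw₀ y (Finset.mem_filter.1 hy).1, ?_, rfl⟩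
  rwa [Finset.sum_filter_of_ne fun y hy hwy => hp y hy hwy]

lemma sum_smul_mem_convexHull_sliceVertices {s : Finset E} {w : E → ℝ}
    (hw₀ : ∀ y ∈ s, 0 ≤ w y) (hw₁ : ∑ y ∈ s, w y = 1)
    (hbal : ∑ b ∈ s with ¬ f b ≤ c, w b * (f b - c) = ∑ a ∈ s with f a ≤ c, w a * (c - f a))
    (hD : 0 < ∑ a ∈ s with f a ≤ c, w a * (c - f a)) :
    ∑ y ∈ s, w y • y ∈ convexHull ℝ (sliceVertices f c s) := by
  set A := s.filter (f · ≤ c)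
  set B := s.filter (¬ f · ≤ c)
  set D := ∑ a ∈ A, w a * (c - f a) with hD_def
  have hA : ∀ a ∈ A, a ∈ s ∧ f a ≤ c := fun a ha => Finset.mem_filter.1 ha
  have hB : ∀ b ∈ B, b ∈ s ∧ c < f b := fun b hb =>
    (Finset.mem_filter.1 hb).imp_right lt_of_not_ge
  have hAB : ∀ a ∈ A, ∀ b ∈ B, f a < f b := fun a ha b hb => (hA a ha).2.trans_lt (hB b hb).2
  have hW₀ : ∀ q ∈ A ×ˢ B, 0 ≤ w q.1 * w q.2 * (f q.2 - f q.1) := fun q hq =>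
    have hq := Finset.mem_product.1 hq
    mul_nonneg (mul_nonneg (hw₀ _ (hA _ hq.1).1) (hw₀ _ (hB _ hq.2).1))
      (sub_nonneg.2 (hAB _ hq.1 _ hq.2).le)
  have hW : ∑ q ∈ A ×ˢ B, w q.1 * w q.2 * (f q.2 - f q.1) = D := by
    rw [sum_product_mul_sub (c := c), hbal, ← hD_def, mul_comm, ← mul_add,
      Finset.sum_filter_add_sum_filter_not, hw₁, mul_one]
  have hWp : ∑ q ∈ A ×ˢ B, (w q.1 * w q.2 * (f q.2 - f q.1)) • levelCrossing f c q.1 q.2 =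
      D • ∑ y ∈ s, w y • y := by
    rw [sum_product_smul_levelCrossing w fun a ha b hb => (hAB a ha b hb).ne, hbal, ← smul_add,
      Finset.sum_filter_add_sum_filter_not]
  have hmem : ∀ q ∈ A ×ˢ B, levelCrossing f c q.1 q.2 ∈ sliceVertices f c s := fun q hq =>
    Or.inl ⟨q.1, hA _ (Finset.mem_product.1 hq).1, q.2, hB _ (Finset.mem_product.1 hq).2, rfl⟩
  have := (A ×ˢ B).centerMass_mem_convexHull hW₀ (hW ▸ hD) hmem
  rwa [Finset.centerMass, hW, hWp, inv_smul_smul₀ hD.ne'] at this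

lemma convexHull_inter_subset_convexHull_sliceVertices (s : Finset E) :
    convexHull ℝ (s : Set E) ∩ {x | f x = c} ⊆ convexHull ℝ (sliceVertices f c s) := by
  rintro x ⟨hx, hfx⟩
  obtain ⟨w, hw₀, hw₁, rfl⟩ := Finset.mem_convexHull'.1 hx
  have hbal := sum_filter_not_le_mul_sub_eq hw₁ hfx
  have hD : 0 ≤ ∑ a ∈ s with f a ≤ c, w a * (c - f a) := Finset.sum_nonneg fun a ha =>
    mul_nonneg (hw₀ a (Finset.mem_filter.1 ha).1) (sub_nonneg.2 (Finset.mem_filter.1 ha).2)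
  rcases hD.eq_or_lt with hD | hD
  · have hsupp := sum_smul_mem_convexHull_filter (f · = c) hw₀ hw₁ fun y hy hwy =>
      apply_eq_of_sum_filter_mul_sub_eq_zero hw₀ hD.symm (hbal.trans hD.symm) hy hwy
    refine convexHull_mono ?_ hsupp
    rw [Finset.coe_filter]
    exact subset_union_right
  · exact sum_smul_mem_convexHull_sliceVertices hw₀ hw₁ hbal hD

theorem convexHull_inter_hyperplane_eq_convexHull_sliceVertices (s : Finset E) :
    convexHull ℝ (s : Set E) ∩ {x | f x = c} = convexHull ℝ (sliceVertices f c s) :=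
  (convexHull_inter_subset_convexHull_sliceVertices (f := f) (c := c) s).antisymm
    (convexHull_sliceVertices_subset (f := f) (c := c) s)

end Slice

section Polytope

variable {E : Type*} [AddCommGroup E] [Module ℝ E]

theorem exists_finset_convexHull_inter_hyperplane (f : E →ₗ[ℝ] ℝ) (c : ℝ) (s : Finset E) :
    ∃ u : Finset E, convexHull ℝ (s : Set E) ∩ {x | f x = c} = convexHull ℝ (u : Set E) :=
  ⟨s.finite_toSet.sliceVertices.toFinset, by
    rw [Set.Finite.coe_toFinset]
    exact convexHull_inter_hyperplane_eq_convexHull_sliceVertices s⟩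

theorem exists_finset_convexHull_inter_biInter_hyperplanes {ι : Type*} (F : Finset ι)
    (f : ι → E →ₗ[ℝ] ℝ) (c : ι → ℝ) (s : Finset E) :
    ∃ u : Finset E,
      convexHull ℝ (s : Set E) ∩ ⋂ i ∈ F, {x | f i x = c i} = convexHull ℝ (u : Set E) := by
  classical
  induction F using Finset.induction_on with
  | empty => exact ⟨s, by simp⟩
  | insert i F _ ih =>
    obtain ⟨u, hu⟩ := ih
    obtain ⟨v, hv⟩ := exists_finset_convexHull_inter_hyperplane (f i) (c i) u
    refine ⟨v, ?_⟩
    rw [Finset.set_biInter_insert, inter_left_comm, hu, inter_comm, hv]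

theorem exists_finset_convexHull_inter_fiber {ι : Type*} [Fintype ι] (L : E →ₗ[ℝ] ι → ℝ)
    (v : ι → ℝ) (s : Finset E) :
    ∃ u : Finset E, convexHull ℝ (s : Set E) ∩ {x | L x = v} = convexHull ℝ (u : Set E) := by
  have hfiber : {x | L x = v} = ⋂ i ∈ Finset.univ, {x | (LinearMap.proj i ∘ₗ L) x = v i} := by
    ext x
    simp [funext_iff]
  rw [hfiber]
  exact exists_finset_convexHull_inter_biInter_hyperplanes _ _ _ s

theorem convexHull_inter_convexHull_eq_image_fst (s t : Set E) :
    convexHull ℝ s ∩ convexHull ℝ t = Prod.fst '' (convexHull ℝ (s ×ˢ t) ∩ {p | p.1 = p.2}) := by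
  ext x
  simp only [convexHull_prod, mem_image, mem_inter_iff, mem_prod, mem_ofPred_eq]
  constructor
  · rintro ⟨hs, ht⟩
    exact ⟨(x, x), ⟨⟨hs, ht⟩, rfl⟩, rfl⟩
  · rintro ⟨⟨a, b⟩, ⟨⟨ha, hb⟩, rfl : a = b⟩, rfl⟩
    exact ⟨ha, hb⟩

end Polytope

theorem polytope_inter_polytope_general (n : ℕ)
    (s t : Finset (Fin n → ℝ)) :
    ∃ u : Finset (Fin n → ℝ),
      convexHull ℝ (s : Set (Fin n → ℝ)) ∩ convexHull ℝ (t : Set (Fin n → ℝ)) =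
        convexHull ℝ (u : Set (Fin n → ℝ)) := by
  classical
  let δ := LinearMap.fst ℝ (Fin n → ℝ) (Fin n → ℝ) - LinearMap.snd ℝ (Fin n → ℝ) (Fin n → ℝ)
  have hdiag : {p : (Fin n → ℝ) × (Fin n → ℝ) | p.1 = p.2} = {p | δ p = 0} := by
    ext p
    simp [δ, sub_eq_zero]
  obtain ⟨u, hu⟩ := exists_finset_convexHull_inter_fiber δ 0 (s ×ˢ t)
  refine ⟨u.image Prod.fst, ?_⟩
  rw [convexHull_inter_convexHull_eq_image_fst, hdiag, ← Finset.coe_product, hu, Finset.coe_image]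
  exact (LinearMap.fst ℝ (Fin n → ℝ) (Fin n → ℝ)).image_convexHull _

/-- The intersection of two polytopes in ℝⁿ is a polytope: if s and t are
finite subsets of ℝⁿ, there is a finite subset u of ℝⁿ such that
conv(s) ∩ conv(t) = conv(u). -/
theorem polytope_inter_polytope (n : ℕ) (hn : 0 < n)
    (s t : Finset (Fin n → ℝ)) :
    ∃ u : Finset (Fin n → ℝ),
      convexHull ℝ (s : Set (Fin n → ℝ)) ∩ convexHull ℝ (t : Set (Fin n → ℝ)) =
        convexHull ℝ (u : Set (Fin n → ℝ)) :=
  polytope_inter_polytope_general n s t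
end

section
/- Let n be a positive integer and let T = ℝⁿ/ℤⁿ be the torus, with quotient map π : ℝⁿ → T. A subset S ⊆ T is polyhedral if and only if the intersection of its preimage π⁻¹(S) with the unit cube [0,1]ⁿ is a finite union of polytopes in ℝⁿ. -/
/-!
Every point of ℝⁿ is congruent modulo ℤⁿ to a point of the unit cube, so π maps
π⁻¹(S) ∩ [0,1]ⁿ onto S. Conversely, if S = π(A) with A a finite union of polytopes, then
π⁻¹(S) ∩ [0,1]ⁿ is the union over m ∈ ℤⁿ of (m + A) ∩ [0,1]ⁿ. Since A is bounded only finitely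
many of these sets are nonempty, and each is a finite union of polytopes because the cube is an
intersection of finitely many half-spaces and a polytope cut by a half-space is again a polytope.
-/

open Set Pointwise

/-- The integer lattice ℤⁿ as an additive subgroup of ℝⁿ. -/
def intLattice (n : ℕ) : AddSubgroup (Fin n → ℝ) where
  carrier := {x | ∀ i, ∃ m : ℤ, x i = (m : ℝ)}
  zero_mem' := fun i => ⟨0, by simp⟩
  add_mem' := by
    intro x y hx hy i
    obtain ⟨a, ha⟩ := hx i
    obtain ⟨b, hb⟩ := hy i
    exact ⟨a + b, by simp [Pi.add_apply, ha, hb]⟩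
  neg_mem' := by
    intro x hx i
    obtain ⟨a, ha⟩ := hx i
    exact ⟨-a, by simp [Pi.neg_apply, ha]⟩

/-- The torus T = ℝⁿ/ℤⁿ, with the quotient topology. -/
abbrev Torus (n : ℕ) := (Fin n → ℝ) ⧸ intLattice n

/-- The quotient map π : ℝⁿ → T. -/
def torusPi (n : ℕ) : (Fin n → ℝ) → Torus n := QuotientAddGroup.mk' (intLattice n)

/-- A subset of the torus is polyhedral if it is the image under π of a
finite union of polytopes in ℝⁿ. -/
def IsPolyhedral {n : ℕ} (S : Set (Torus n)) : Prop :=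
  ∃ A : Set (Fin n → ℝ), IsFinUnionOfPolytopes A ∧ S = torusPi n '' A

section CrossPoint

variable {E : Type*} [AddCommGroup E] [Module ℝ E] (f : E →ₗ[ℝ] ℝ) (c : ℝ)

/-- The point where the line through `o` and `z` meets the hyperplane `f = c`. -/
noncomputable def crossPoint (o z : E) : E :=
  AffineMap.lineMap o z ((c - f o) / (f z - f o))

variable {f c}

lemma map_crossPoint {o z : E} (h : f o ≠ f z) : f (crossPoint f c o z) = c := by
  have : f z - f o ≠ 0 := sub_ne_zero.2 h.symm
  simp only [crossPoint, AffineMap.lineMap_apply_module', map_add, map_smul, map_sub, smul_eq_mul]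
  field_simp
  ring

lemma crossPoint_comm {o z : E} (h : f o ≠ f z) : crossPoint f c o z = crossPoint f c z o := by
  have h₁ : f z - f o ≠ 0 := sub_ne_zero.2 h.symm
  have h₂ : f o - f z ≠ 0 := sub_ne_zero.2 h
  have : (c - f z) / (f o - f z) = 1 - (c - f o) / (f z - f o) := by
    field_simp
    ring
  simp only [crossPoint, AffineMap.lineMap_apply_module', this]
  module

lemma crossPoint_neg (o z : E) : crossPoint (-f) (-c) o z = crossPoint f c o z := by
  simp only [crossPoint, LinearMap.neg_apply]
  rw [← neg_div_neg_eq]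
  ring_nf

lemma crossPoint_mem_segment {o z : E} (ho : f o ≤ c) (hz : c ≤ f z) (h : f o < f z) :
    crossPoint f c o z ∈ segment ℝ o z := by
  rw [segment_eq_image_lineMap]
  exact ⟨_, ⟨div_nonneg (by linarith) (by linarith),
    div_le_one_of_le₀ (by linarith) (by linarith)⟩, rfl⟩

lemma mem_segment_crossPoint {o z x : E} (ho : f o ≤ c) (hz : c < f z)
    (hx : x ∈ segment ℝ o z) (hxc : f x ≤ c) : x ∈ segment ℝ o (crossPoint f c o z) := by
  rw [segment_eq_image_lineMap] at hx ⊢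
  obtain ⟨b, ⟨hb₀, -⟩, rfl⟩ := hx
  have hbθ : b ≤ (c - f o) / (f z - f o) := by
    rw [le_div_iff₀ (by linarith)]
    simp only [AffineMap.lineMap_apply_module', map_add, map_smul, map_sub, smul_eq_mul] at hxc
    linarith
  rcases hb₀.eq_or_lt with rfl | hb
  · exact ⟨0, ⟨le_rfl, zero_le_one⟩, by simp⟩
  · refine ⟨b / ((c - f o) / (f z - f o)),
      ⟨div_nonneg hb.le (hb.le.trans hbθ), div_le_one_of_le₀ hbθ (hb.le.trans hbθ)⟩, ?_⟩
    rw [crossPoint, AffineMap.lineMap_lineMap_right, div_mul_cancel₀ _ (hb.trans_le hbθ).ne']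

lemma convex_setOf_crossPoint_mem (o : E) {C : Set E} (hC : Convex ℝ C) :
    Convex ℝ {z | f o < f z ∧ crossPoint f c o z ∈ C} := by
  rintro z₁ ⟨h₁, hC₁⟩ z₂ ⟨h₂, hC₂⟩ a b ha hb hab
  set D₁ := f z₁ - f o
  set D₂ := f z₂ - f o
  have hD₁ : 0 < D₁ := sub_pos.2 h₁
  have hD₂ : 0 < D₂ := sub_pos.2 h₂
  have hD : f (a • z₁ + b • z₂) - f o = a * D₁ + b * D₂ := by
    simp only [D₁, D₂, map_add, map_smul, smul_eq_mul]
    linear_combination (f o) * hab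
  have hDpos : 0 < a * D₁ + b * D₂ := by
    rcases ha.eq_or_lt with rfl | ha'
    · rw [zero_add] at hab
      simpa [hab] using hD₂
    · positivity
  refine ⟨by linarith, ?_⟩
  -- The crossing point of `a • z₁ + b • z₂` is the combination of those of `z₁` and `z₂` with
  -- weights proportional to `a * D₁` and `b * D₂`.
  convert hC hC₁ hC₂ (by positivity : 0 ≤ a * D₁ / (a * D₁ + b * D₂))
    (by positivity : 0 ≤ b * D₂ / (a * D₁ + b * D₂)) (by field_simp) using 1
  have e₁ : a * D₁ / (a * D₁ + b * D₂) * ((c - f o) / D₁) =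
      (c - f o) / (a * D₁ + b * D₂) * a := by
    field_simp
  have e₂ : b * D₂ / (a * D₁ + b * D₂) * ((c - f o) / D₂) =
      (c - f o) / (a * D₁ + b * D₂) * b := by
    field_simp
  have e₃ : a * D₁ / (a * D₁ + b * D₂) + b * D₂ / (a * D₁ + b * D₂) = 1 := by
    field_simp
  simp only [crossPoint, AffineMap.lineMap_apply_module', hD]
  linear_combination (norm := module) -e₁ • (z₁ - o) - e₂ • (z₂ - o) - e₃ • o
    + ((c - f o) / (a * D₁ + b * D₂) * hab) • o

lemma crossPoint_mem_convexHull_image {o z : E} {K : Set E} (hK : ∀ q ∈ K, f o < f q)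
    (hz : z ∈ convexHull ℝ K) : crossPoint f c o z ∈ convexHull ℝ (crossPoint f c o '' K) :=
  (convexHull_min
    (t := {z | f o < f z ∧ crossPoint f c o z ∈ convexHull ℝ (crossPoint f c o '' K)})
    (fun q hq => ⟨hK q hq, subset_convexHull ℝ _ (mem_image_of_mem _ hq)⟩)
    (convex_setOf_crossPoint_mem o (convex_convexHull ℝ _)) hz).2

variable (f c)

/-- A point of `convexHull s` below the hyperplane lies on a segment from `y ∈ convexHull L` to
`z ∈ convexHull N` (`L`, `N` the points of `s` below and above), hence on the segment from `y` to
the crossing point of `yz`. Projecting centrally, first from `y` and then from each vertex of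
`N`, puts that crossing point in the hull of the crossing points of the edges from `L` to `N`. -/
theorem convexHull_inter_halfSpace (s : Set E) :
    convexHull ℝ s ∩ {x | f x ≤ c} =
      convexHull ℝ (s ∩ {x | f x ≤ c} ∪
        image2 (crossPoint f c) (s ∩ {x | f x ≤ c}) (s \ {x | f x ≤ c})) := by
  set L := s ∩ {x | f x ≤ c}
  set N := s \ {x | f x ≤ c}
  set T := L ∪ image2 (crossPoint f c) L N
  have hLc : ∀ p ∈ L, f p ≤ c := fun p hp => hp.2
  have hNc : ∀ q ∈ N, c < f q := fun q hq => not_le.1 hq.2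
  have hLT : convexHull ℝ L ⊆ convexHull ℝ T := convexHull_mono subset_union_left
  refine Subset.antisymm ?_ (convexHull_min (union_subset ?_ ?_)
    ((convex_convexHull ℝ s).inter (convex_halfSpace_le f.isLinear c)))
  · rintro x ⟨hx, hxc⟩
    have hs : s = L ∪ N := (inter_union_sdiff s _).symm
    rw [hs] at hx
    rcases N.eq_empty_or_nonempty with hN | hN
    · rw [hN, union_empty] at hx
      exact hLT hx
    rcases L.eq_empty_or_nonempty with hL | hL
    · rw [hL, empty_union] at hx
      have : c < f x := convexHull_min hNc (convex_halfSpace_gt f.isLinear c) hx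
      exact absurd (show f x ≤ c from hxc) this.not_ge
    rw [convexHull_union hL hN, mem_convexJoin] at hx
    obtain ⟨y, hy, z, hz, hxyz⟩ := hx
    have hyc : f y ≤ c := convexHull_min hLc (convex_halfSpace_le f.isLinear c) hy
    have hzc : c < f z := convexHull_min hNc (convex_halfSpace_gt f.isLinear c) hz
    have hcross : crossPoint f c y z ∈ convexHull ℝ T := by
      refine convexHull_min ?_ (convex_convexHull ℝ T)
        (crossPoint_mem_convexHull_image (fun q hq => hyc.trans_lt (hNc q hq)) hz)
      rintro _ ⟨q, hq, rfl⟩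
      have hyq : f y ≠ f q := (hyc.trans_lt (hNc q hq)).ne
      rw [crossPoint_comm hyq, ← crossPoint_neg]
      refine convexHull_min ?_ (convex_convexHull ℝ T) (crossPoint_mem_convexHull_image
        (fun p hp => neg_lt_neg ((hLc p hp).trans_lt (hNc q hq))) hy)
      rintro _ ⟨p, hp, rfl⟩
      rw [crossPoint_neg, ← crossPoint_comm ((hLc p hp).trans_lt (hNc q hq)).ne]
      exact subset_convexHull ℝ T (Or.inr ⟨p, hp, q, hq, rfl⟩)
    exact (convex_convexHull ℝ T).segment_subset (hLT hy) hcross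
      (mem_segment_crossPoint hyc hzc hxyz hxc)
  · exact fun p hp => ⟨subset_convexHull ℝ s hp.1, hp.2⟩
  · rintro _ ⟨p, hp, q, hq, rfl⟩
    have hpq : f p < f q := (hLc p hp).trans_lt (hNc q hq)
    exact ⟨segment_subset_convexHull hp.1 hq.1
      (crossPoint_mem_segment (hLc p hp) (hNc q hq).le hpq), (map_crossPoint hpq.ne).le⟩

end CrossPoint

def unitCube (n : ℕ) : Set (Fin n → ℝ) := {x | ∀ i, 0 ≤ x i ∧ x i ≤ 1}

section Polytopes

variable {n : ℕ}

lemma IsPolytope.inter_halfSpace {P : Set (Fin n → ℝ)} (hP : IsPolytope P)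
    (f : (Fin n → ℝ) →ₗ[ℝ] ℝ) (c : ℝ) : IsPolytope (P ∩ {x | f x ≤ c}) := by
  obtain ⟨s, rfl⟩ := hP
  have hL := s.finite_toSet.inter_of_left {x | f x ≤ c}
  have hT := hL.union (hL.image2 (crossPoint f c) (s.finite_toSet.sdiff (t := {x | f x ≤ c})))
  exact ⟨hT.toFinset, by rw [hT.coe_toFinset, convexHull_inter_halfSpace]⟩

lemma IsPolytope.inter_biInter_halfSpace {ι : Type*} {P : Set (Fin n → ℝ)} (hP : IsPolytope P)
    (s : Finset ι) (f : ι → (Fin n → ℝ) →ₗ[ℝ] ℝ) (c : ι → ℝ) :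
    IsPolytope (P ∩ ⋂ i ∈ s, {x | f i x ≤ c i}) := by
  classical
  induction s using Finset.induction_on with
  | empty => simpa using hP
  | insert i s _ ih =>
    rw [Finset.set_biInter_insert, inter_left_comm, inter_comm]
    exact ih.inter_halfSpace (f i) (c i)

lemma IsPolytope.inter_unitCube {P : Set (Fin n → ℝ)} (hP : IsPolytope P) :
    IsPolytope (P ∩ unitCube n) := by
  let π : Fin n → (Fin n → ℝ) →ₗ[ℝ] ℝ := LinearMap.proj
  have hcube : unitCube n = ⋂ i ∈ (Finset.univ : Finset (Fin n ⊕ Fin n)),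
      {x | Sum.elim (fun j => -π j) π i x ≤ Sum.elim (fun _ => (0 : ℝ)) (fun _ => 1) i} := by
    ext x
    simp [π, unitCube, Sum.forall, forall_and]
  rw [hcube]
  exact hP.inter_biInter_halfSpace _ _ _

lemma IsPolytope.vadd {P : Set (Fin n → ℝ)} (hP : IsPolytope P) (v : Fin n → ℝ) :
    IsPolytope (v +ᵥ P) := by
  obtain ⟨s, rfl⟩ := hP
  exact ⟨v +ᵥ s, by rw [Finset.coe_vadd_finset, convexHull_vadd]⟩

lemma IsPolytope.isBounded {P : Set (Fin n → ℝ)} (hP : IsPolytope P) : Bornology.IsBounded P := by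
  obtain ⟨s, rfl⟩ := hP
  exact (s.finite_toSet.isCompact_convexHull (𝕜 := ℝ)).isBounded

lemma isFinUnionOfPolytopes_iff {A : Set (Fin n → ℝ)} :
    IsFinUnionOfPolytopes A ↔
      ∃ F : Set (Set (Fin n → ℝ)), F.Finite ∧ (∀ P ∈ F, IsPolytope P) ∧ A = ⋃₀ F := by
  constructor
  · rintro ⟨k, P, hP, rfl⟩
    exact ⟨range P, finite_range P, forall_mem_range.2 hP, (sUnion_range P).symm⟩
  · rintro ⟨F, hF, hP, rfl⟩
    have := hF.to_subtype
    obtain ⟨k, ⟨e⟩⟩ := Finite.exists_equiv_fin F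
    refine ⟨k, fun i => e.symm i, fun i => hP _ (e.symm i).2, ?_⟩
    rw [sUnion_eq_iUnion]
    exact (e.symm.surjective.iUnion_comp _).symm

lemma IsFinUnionOfPolytopes.iUnion {ι : Type*} {A : ι → Set (Fin n → ℝ)}
    (hA : ∀ i, IsFinUnionOfPolytopes (A i)) (hfin : {i | (A i).Nonempty}.Finite) :
    IsFinUnionOfPolytopes (⋃ i, A i) := by
  choose F hF hP hAF using fun i => isFinUnionOfPolytopes_iff.1 (hA i)
  refine isFinUnionOfPolytopes_iff.2 ⟨⋃ i ∈ {i | (A i).Nonempty}, F i,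
    hfin.biUnion fun i _ => hF i, ?_, ?_⟩
  · simp only [mem_iUnion]
    rintro P ⟨i, -, hPi⟩
    exact hP i P hPi
  · ext x
    simp only [mem_iUnion, mem_sUnion, mem_ofPred_eq, exists_prop]
    constructor
    · rintro ⟨i, hx⟩
      obtain ⟨P, hPi, hxP⟩ := hAF i ▸ hx
      exact ⟨P, ⟨i, ⟨x, hx⟩, hPi⟩, hxP⟩
    · rintro ⟨P, ⟨i, -, hPi⟩, hxP⟩
      exact ⟨i, hAF i ▸ ⟨P, hPi, hxP⟩⟩

lemma IsFinUnionOfPolytopes.vadd {A : Set (Fin n → ℝ)} (hA : IsFinUnionOfPolytopes A)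
    (v : Fin n → ℝ) : IsFinUnionOfPolytopes (v +ᵥ A) := by
  obtain ⟨k, P, hP, rfl⟩ := hA
  exact ⟨k, fun i => v +ᵥ P i, fun i => (hP i).vadd v, vadd_set_iUnion v P⟩

lemma IsFinUnionOfPolytopes.inter_unitCube {A : Set (Fin n → ℝ)} (hA : IsFinUnionOfPolytopes A) :
    IsFinUnionOfPolytopes (A ∩ unitCube n) := by
  obtain ⟨k, P, hP, rfl⟩ := hA
  exact ⟨k, fun i => P i ∩ unitCube n, fun i => (hP i).inter_unitCube, iUnion_inter _ _⟩

lemma IsFinUnionOfPolytopes.isBounded {A : Set (Fin n → ℝ)} (hA : IsFinUnionOfPolytopes A) :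
    Bornology.IsBounded A := by
  obtain ⟨k, P, hP, rfl⟩ := hA
  exact Bornology.isBounded_iUnion.2 fun i => (hP i).isBounded

end Polytopes

section Torus

variable {n : ℕ}

lemma mem_intLattice_iff {v : Fin n → ℝ} :
    v ∈ intLattice n ↔ ∃ m : Fin n → ℤ, v = fun i => (m i : ℝ) := by
  refine ⟨fun h => ?_, ?_⟩
  · choose m hm using h
    exact ⟨m, funext hm⟩
  · rintro ⟨m, rfl⟩ i
    exact ⟨m i, rfl⟩

lemma preimage_image_torusPi (A : Set (Fin n → ℝ)) :
    torusPi n ⁻¹' (torusPi n '' A) = ⋃ m : Fin n → ℤ, (fun i => (m i : ℝ)) +ᵥ A := by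
  ext x
  simp only [torusPi, QuotientAddGroup.mk'_apply, mem_preimage, mem_image, QuotientAddGroup.eq,
    mem_intLattice_iff, mem_iUnion, mem_vadd_set, vadd_eq_add]
  constructor
  · rintro ⟨a, ha, m, hm⟩
    exact ⟨m, a, ha, by rw [← hm]; abel⟩
  · rintro ⟨m, a, ha, rfl⟩
    exact ⟨a, ha, m, by abel⟩

lemma torusPi_image_unitCube : torusPi n '' unitCube n = univ := by
  refine eq_univ_of_forall fun y => ?_
  obtain ⟨v, rfl⟩ := QuotientAddGroup.mk_surjective y
  refine ⟨fun i => Int.fract (v i), fun i => ⟨Int.fract_nonneg _, (Int.fract_lt_one _).le⟩, ?_⟩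
  exact QuotientAddGroup.eq.2
    (mem_intLattice_iff.2 ⟨fun i => ⌊v i⌋, funext fun i => by
      simp only [Pi.add_apply, Pi.neg_apply, Int.fract]
      ring⟩)

lemma finite_setOf_vadd_inter_unitCube_nonempty {A : Set (Fin n → ℝ)}
    (hA : Bornology.IsBounded A) :
    {m : Fin n → ℤ | (((fun i => (m i : ℝ)) +ᵥ A) ∩ unitCube n).Nonempty}.Finite := by
  obtain ⟨R, hR⟩ := hA.exists_norm_le
  refine (Set.Finite.pi (t := fun _ => Icc (-⌈R⌉ - 1) (⌈R⌉ + 1)) fun _ => finite_Icc _ _).subset ?_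
  rintro m ⟨_, ⟨a, ha, rfl⟩, hcube⟩ i -
  obtain ⟨h₀, h₁⟩ : 0 ≤ (m i : ℝ) + a i ∧ (m i : ℝ) + a i ≤ 1 := hcube i
  have hai : |a i| ≤ R := (Real.norm_eq_abs (a i) ▸ norm_le_pi_norm a i).trans (hR a ha)
  have hR' := Int.le_ceil R
  obtain ⟨hai₁, hai₂⟩ := abs_le.1 hai
  constructor
  · exact_mod_cast (show ((-⌈R⌉ - 1 : ℤ) : ℝ) ≤ m i by push_cast; linarith)
  · exact_mod_cast (show (m i : ℝ) ≤ ((⌈R⌉ + 1 : ℤ) : ℝ) by push_cast; linarith)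

end Torus

theorem isPolyhedral_iff_preimage_inter_unitCube_general (n : ℕ)
    (S : Set (Torus n)) :
    IsPolyhedral S ↔
      IsFinUnionOfPolytopes
        (torusPi n ⁻¹' S ∩ {x : Fin n → ℝ | ∀ i, 0 ≤ x i ∧ x i ≤ 1}) := by
  change IsPolyhedral S ↔ IsFinUnionOfPolytopes (torusPi n ⁻¹' S ∩ unitCube n)
  constructor
  · rintro ⟨A, hA, rfl⟩
    rw [preimage_image_torusPi, iUnion_inter]
    exact IsFinUnionOfPolytopes.iUnion (fun m => (hA.vadd _).inter_unitCube)
      (finite_setOf_vadd_inter_unitCube_nonempty hA.isBounded)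
  · intro h
    refine ⟨_, h, ?_⟩
    rw [image_preimage_inter, torusPi_image_unitCube, inter_univ]

/-- A subset S of the torus T = ℝⁿ/ℤⁿ is polyhedral if and only if the
intersection of its preimage π⁻¹(S) with the unit cube [0,1]ⁿ is a finite
union of polytopes in ℝⁿ. -/
theorem isPolyhedral_iff_preimage_inter_unitCube (n : ℕ) (hn : 0 < n)
    (S : Set (Torus n)) :
    IsPolyhedral S ↔
      IsFinUnionOfPolytopes
        (torusPi n ⁻¹' S ∩ {x : Fin n → ℝ | ∀ i, 0 ≤ x i ∧ x i ≤ 1}) :=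
  isPolyhedral_iff_preimage_inter_unitCube_general n S
end
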